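/- Gagliardo seminorm decomposition over a covering by balls: Let 1 < s ≤ 2 and let (B_j)_{j∈J} be a countable family of open balls in ℝ² whose union is ℝ², and suppose there exists δ > 0 such that any two points x, y ∈ ℝ² with |x − y| ≤ δ belong together to some common ball B_j. Then there is a constant C = C(s, δ) such that for every measurable v : ℝ² → ℝ: ∫_{ℝ²} ∫_{ℝ²} |v(x) − v(y)|² |x − y|^{−2s} dx dy ≤ C Σ_{j∈J} ( ‖v‖²_{L²(B_j)} + ∫_{B_j} ∫_{B_j} |v(x) − v(y)|² |x − y|^{−2s} dx dy ). -/

import Mathlib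

/-!
Pairs at distance at most `δ` lie in a common ball, so their contribution is bounded by
`∑ⱼ |v|²_{Ẇ^{s-1,2}(Bⱼ)}`. For far pairs, `|v(x) - v(y)|² ≤ 2|v(x)|² + 2|v(y)|²`, and translation
invariance turns their contribution into `4 c ‖v‖²_{L²(ℝ²)}` with `c = ∫_{|z|>δ} |z|^{-2s} dz`,
which is finite because `2s` exceeds the dimension `2`. Since the balls cover the plane,
`‖v‖²_{L²(ℝ²)} ≤ ∑ⱼ ‖v‖²_{L²(Bⱼ)}`.
-/

open MeasureTheory Set
open scoped ENNReal

noncomputable section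

/-- The integrand of the Gagliardo seminorm `|v|²_{Ẇ^{s-1,2}}`:
`|v(x) − v(y)|² / |x − y|^{2s}` (valued in `ℝ≥0∞`). -/
def gagliardoKernel (s : ℝ) (v : EuclideanSpace ℝ (Fin 2) → ℝ)
    (x y : EuclideanSpace ℝ (Fin 2)) : ℝ≥0∞ :=
  ((‖v x - v y‖₊ : ℝ≥0∞) ^ 2) / ENNReal.ofReal (dist x y ^ (2 * s))

open Function Metric Module

section PseudoMetric

variable {X : Type*} [PseudoMetricSpace X] [MeasurableSpace X]

theorem lintegral_lintegral_le_tsum_add_of_dist_le {ι : Type*} [Countable ι] (μ : Measure X)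
    [SFinite μ] {K F : X → X → ℝ≥0∞} (hK : Measurable (uncurry K))
    (hF : Measurable (uncurry F)) {s : ι → Set X} {δ : ℝ}
    (hnear : ∀ x y, dist x y ≤ δ → ∃ j, x ∈ s j ∧ y ∈ s j)
    (hfar : ∀ x y, δ < dist x y → K x y ≤ F x y) :
    ∫⁻ x, ∫⁻ y, K x y ∂μ ∂μ ≤
      ∑' j, ∫⁻ x in s j, ∫⁻ y in s j, K x y ∂μ ∂μ + ∫⁻ x, ∫⁻ y, F x y ∂μ ∂μ := by
  set S := ⋃ j, s j ×ˢ s j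
  have hfar' : ∀ p ∈ Sᶜ, uncurry K p ≤ uncurry F p := by
    refine fun p hp => hfar _ _ (lt_of_not_ge fun h => hp ?_)
    obtain ⟨j, hx, hy⟩ := hnear _ _ h
    exact mem_iUnion.2 ⟨j, hx, hy⟩
  calc ∫⁻ x, ∫⁻ y, K x y ∂μ ∂μ = ∫⁻ p, uncurry K p ∂μ.prod μ :=
        (lintegral_prod _ hK.aemeasurable).symm
    _ ≤ ∫⁻ p in S, uncurry K p ∂μ.prod μ + ∫⁻ p in Sᶜ, uncurry K p ∂μ.prod μ := by
        rw [← setLIntegral_univ, ← union_compl_self S]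
        exact lintegral_union_le _ _ _
    _ ≤ ∑' j, ∫⁻ p in s j ×ˢ s j, uncurry K p ∂μ.prod μ + ∫⁻ p, uncurry F p ∂μ.prod μ :=
        add_le_add (lintegral_iUnion_le _ _)
          ((setLIntegral_mono hF hfar').trans (setLIntegral_le_lintegral _ _))
    _ ≤ _ := by
        gcongr with j
        · rw [← Measure.prod_restrict]
          exact lintegral_prod_le _
        · exact lintegral_prod_le _

end PseudoMetric

section NormedGroup

variable {E : Type*} [NormedAddCommGroup E] [MeasurableSpace E] [BorelSpace E]
  (μ : Measure E) [μ.IsAddRightInvariant]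

theorem lintegral_comp_dist_eq (φ : ℝ → ℝ≥0∞) (x : E) :
    ∫⁻ y, φ (dist x y) ∂μ = ∫⁻ z, φ ‖z‖ ∂μ := by
  simp_rw [dist_comm x, dist_eq_norm]
  exact lintegral_sub_right_eq_self (fun z => φ ‖z‖) x

theorem lintegral_lintegral_add_mul_comp_dist [SecondCountableTopology E] [SFinite μ]
    {g : E → ℝ≥0∞} (hg : Measurable g) {φ : ℝ → ℝ≥0∞} (hφ : Measurable φ) :
    ∫⁻ x, ∫⁻ y, (g x + g y) * φ (dist x y) ∂μ ∂μ = 2 * (∫⁻ z, φ ‖z‖ ∂μ) * ∫⁻ x, g x ∂μ := by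
  have hswap : ∫⁻ x, ∫⁻ y, g y * φ (dist x y) ∂μ ∂μ =
      ∫⁻ y, ∫⁻ x, g y * φ (dist y x) ∂μ ∂μ := by
    rw [lintegral_lintegral_swap (by fun_prop)]
    exact lintegral_congr fun y => lintegral_congr fun x => by rw [dist_comm]
  have hinner : ∀ x, ∫⁻ y, g x * φ (dist x y) ∂μ = (∫⁻ z, φ ‖z‖ ∂μ) * g x := fun x => by
    rw [lintegral_const_mul _ (by fun_prop), lintegral_comp_dist_eq, mul_comm]
  simp_rw [add_mul]
  rw [lintegral_congr fun x => lintegral_add_left (by fun_prop) _, lintegral_add_left (by fun_prop),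
    hswap]
  simp_rw [hinner]
  rw [lintegral_const_mul _ hg]
  ring

end NormedGroup

def tailKernel (p δ t : ℝ) : ℝ≥0∞ :=
  (Ioi δ).indicator (fun t => (ENNReal.ofReal (t ^ p))⁻¹) t

@[fun_prop]
theorem measurable_tailKernel (p δ : ℝ) : Measurable (tailKernel p δ) :=
  (Measurable.inv (by fun_prop)).indicator measurableSet_Ioi

section FiniteDimensional

variable {E : Type*} [NormedAddCommGroup E] [NormedSpace ℝ E] [FiniteDimensional ℝ E]
  [MeasurableSpace E] [BorelSpace E]

theorem lintegral_tailKernel_norm_lt_top (μ : Measure E) [μ.IsAddHaarMeasure]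
    {p δ : ℝ} (hp : (finrank ℝ E : ℝ) < p) (hδ : 0 < δ) :
    ∫⁻ z, tailKernel p δ ‖z‖ ∂μ < ∞ := by
  have hp0 : 0 < p := (Nat.cast_nonneg _).trans_lt hp
  set M := ((1 + δ) / δ) ^ p
  have hM : 0 < M := by positivity
  have hbound : ∀ t : ℝ, tailKernel p δ t ≤
      ENNReal.ofReal M * ENNReal.ofReal ((1 + t) ^ (-p)) := by
    intro t
    by_cases ht : δ < t
    · have ht0 : 0 < t := hδ.trans ht
      have hlin : 1 + t ≤ (1 + δ) / δ * t := by
        rw [div_mul_eq_mul_div, le_div_iff₀ hδ]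
        nlinarith
      rw [tailKernel, indicator_of_mem (mem_Ioi.2 ht), ← ENNReal.ofReal_inv_of_pos (by positivity),
        ← ENNReal.ofReal_mul (by positivity)]
      refine ENNReal.ofReal_le_ofReal ?_
      calc (t ^ p)⁻¹ = M * (M * t ^ p)⁻¹ := by field_simp
        _ = M * (((1 + δ) / δ * t) ^ p)⁻¹ := by rw [Real.mul_rpow (by positivity) ht0.le]
        _ ≤ M * ((1 + t) ^ p)⁻¹ := by gcongr
        _ = M * (1 + t) ^ (-p) := by rw [Real.rpow_neg (by positivity)]
    · rw [tailKernel, indicator_of_notMem (mt mem_Ioi.1 ht)]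
      exact zero_le
  calc _ ≤ ∫⁻ z, ENNReal.ofReal M * ENNReal.ofReal ((1 + ‖z‖) ^ (-p)) ∂μ :=
        lintegral_mono fun z => hbound ‖z‖
    _ < ∞ := by
        rw [lintegral_const_mul' _ _ ENNReal.ofReal_ne_top]
        exact ENNReal.mul_lt_top ENNReal.ofReal_lt_top (finite_integral_one_add_norm hp)

end FiniteDimensional

theorem measurable_uncurry_gagliardoKernel (s : ℝ) {v : EuclideanSpace ℝ (Fin 2) → ℝ}
    (hv : Measurable v) : Measurable (uncurry (gagliardoKernel s v)) := by
  unfold gagliardoKernel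
  fun_prop

theorem gagliardoKernel_le_of_lt_dist (s : ℝ) {δ : ℝ} (v : EuclideanSpace ℝ (Fin 2) → ℝ)
    {x y : EuclideanSpace ℝ (Fin 2)} (h : δ < dist x y) :
    gagliardoKernel s v x y ≤ (2 * (‖v x‖₊ : ℝ≥0∞) ^ 2 + 2 * (‖v y‖₊ : ℝ≥0∞) ^ 2) *
      tailKernel (2 * s) δ (dist x y) := by
  rw [gagliardoKernel, tailKernel, indicator_of_mem (mem_Ioi.2 h), div_eq_mul_inv, ← mul_add]
  gcongr
  have : ‖v x - v y‖₊ ^ 2 ≤ 2 * (‖v x‖₊ ^ 2 + ‖v y‖₊ ^ 2) :=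
    (pow_le_pow_left₀ zero_le (nnnorm_sub_le _ _) 2).trans add_sq_le
  exact_mod_cast this

theorem gagliardo_seminorm_ball_decomposition_general (s δ : ℝ) (hs1 : 1 < s)
    (hδ : 0 < δ) :
    ∃ C > 0, ∀ (ι : Type) (_ : Countable ι)
      (c : ι → EuclideanSpace ℝ (Fin 2)) (r : ι → ℝ),
      (∀ j, 0 < r j) →
      (∀ x : EuclideanSpace ℝ (Fin 2), ∃ j, x ∈ Metric.ball (c j) (r j)) →
      (∀ x y : EuclideanSpace ℝ (Fin 2), dist x y ≤ δ →
        ∃ j, x ∈ Metric.ball (c j) (r j) ∧ y ∈ Metric.ball (c j) (r j)) →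
      ∀ v : EuclideanSpace ℝ (Fin 2) → ℝ, Measurable v →
        (∫⁻ x, ∫⁻ y, gagliardoKernel s v x y) ≤
          ENNReal.ofReal C *
            ∑' j : ι,
              ((∫⁻ x in Metric.ball (c j) (r j), (‖v x‖₊ : ℝ≥0∞) ^ 2) +
                ∫⁻ x in Metric.ball (c j) (r j), ∫⁻ y in Metric.ball (c j) (r j),
                  gagliardoKernel s v x y) := by
  set c₀ := ∫⁻ z : EuclideanSpace ℝ (Fin 2), tailKernel (2 * s) δ ‖z‖
  have hc₀ : c₀ ≠ ∞ := (lintegral_tailKernel_norm_lt_top volume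
    (by rw [finrank_euclideanSpace_fin]; push_cast; linarith) hδ).ne
  refine ⟨1 + 4 * c₀.toReal, by positivity, fun ι _ c r _ hcov hnear v hv => ?_⟩
  set L := fun j => ∫⁻ x in ball (c j) (r j), (‖v x‖₊ : ℝ≥0∞) ^ 2
  set G := fun j => ∫⁻ x in ball (c j) (r j), ∫⁻ y in ball (c j) (r j), gagliardoKernel s v x y
  have hL2 : ∫⁻ x, (‖v x‖₊ : ℝ≥0∞) ^ 2 ≤ ∑' j, L j := by
    rw [← setLIntegral_univ, ← iUnion_eq_univ_iff.2 hcov]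
    exact lintegral_iUnion_le _ _
  calc ∫⁻ x, ∫⁻ y, gagliardoKernel s v x y
      ≤ ∑' j, G j + ∫⁻ x, ∫⁻ y,
          (2 * (‖v x‖₊ : ℝ≥0∞) ^ 2 + 2 * (‖v y‖₊ : ℝ≥0∞) ^ 2) * tailKernel (2 * s) δ (dist x y) :=
        lintegral_lintegral_le_tsum_add_of_dist_le volume
          (measurable_uncurry_gagliardoKernel s hv) (by fun_prop) hnear
          fun x y h => gagliardoKernel_le_of_lt_dist s v h
    _ = ∑' j, G j + 4 * c₀ * ∫⁻ x, (‖v x‖₊ : ℝ≥0∞) ^ 2 := by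
        rw [lintegral_lintegral_add_mul_comp_dist volume (g := fun x => 2 * (‖v x‖₊ : ℝ≥0∞) ^ 2)
          (by fun_prop) (by fun_prop), lintegral_const_mul _ (by fun_prop)]
        ring
    _ ≤ (∑' j, L j + ∑' j, G j) + 4 * c₀ * (∑' j, L j + ∑' j, G j) := by
        gcongr
        · exact le_add_self
        · exact hL2.trans le_self_add
    _ = ENNReal.ofReal (1 + 4 * c₀.toReal) * ∑' j, (L j + G j) := by
        rw [ENNReal.tsum_add, ENNReal.ofReal_add zero_le_one (by positivity),
          ENNReal.ofReal_mul zero_le_four, ENNReal.ofReal_toReal hc₀]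
        norm_num
        ring

/-- **Gagliardo seminorm decomposition over a covering by balls.** Let `1 < s ≤ 2` and let
`(B_j)_{j ∈ J}` be a countable family of open balls covering `ℝ²` such that any two points at
distance `≤ δ` lie in a common ball. Then
`|v|²_{Ẇ^{s-1,2}(ℝ²)} ≤ C(s,δ) Σ_j ( ‖v‖²_{L²(B_j)} + |v|²_{Ẇ^{s-1,2}(B_j)} )`. -/
theorem gagliardo_seminorm_ball_decomposition (s δ : ℝ) (hs1 : 1 < s) (hs2 : s ≤ 2)
    (hδ : 0 < δ) :
    ∃ C > 0, ∀ (ι : Type) (_ : Countable ι)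
      (c : ι → EuclideanSpace ℝ (Fin 2)) (r : ι → ℝ),
      (∀ j, 0 < r j) →
      (∀ x : EuclideanSpace ℝ (Fin 2), ∃ j, x ∈ Metric.ball (c j) (r j)) →
      (∀ x y : EuclideanSpace ℝ (Fin 2), dist x y ≤ δ →
        ∃ j, x ∈ Metric.ball (c j) (r j) ∧ y ∈ Metric.ball (c j) (r j)) →
      ∀ v : EuclideanSpace ℝ (Fin 2) → ℝ, Measurable v →
        (∫⁻ x, ∫⁻ y, gagliardoKernel s v x y) ≤
          ENNReal.ofReal C *
            ∑' j : ι,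
              ((∫⁻ x in Metric.ball (c j) (r j), (‖v x‖₊ : ℝ≥0∞) ^ 2) +
                ∫⁻ x in Metric.ball (c j) (r j), ∫⁻ y in Metric.ball (c j) (r j),
                  gagliardoKernel s v x y) :=
  gagliardo_seminorm_ball_decomposition_general s δ hs1 hδ
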